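/- Let f : H → ℝ be a convex differentiable function on a real Hilbert space with minimizer x*, and let x be a C² solution of ẍ(t) + (α/t) ẋ(t) + ∇f(x(t)) = 0 with α ≥ 3. Define E(t) = t²(f(x(t)) - f(x*)) + (1/2)‖2(x(t) - x*) + t ẋ(t)‖² + (α - 3)‖x(t) - x*‖². Then E is nonincreasing on (0,∞). -/

import Mathlib

/-!
Along a trajectory, the derivative of `E` is
`2t (f(x) - f(x*)) + t² ⟪∇f(x), ẋ⟫ + ⟪2(x - x*) + tẋ, 3ẋ + tẍ⟫ + 2(α - 3) ⟪x - x*, ẋ⟫`.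
The ODE gives `3ẋ + tẍ = (3 - α)ẋ - t∇f(x)`, which collapses this to
`2t (f(x) - f(x*) - ⟪∇f(x), x - x*⟫) - (α - 3) t ‖ẋ‖²`;
both terms are nonpositive for `t > 0`, the first by convexity and the second since `α ≥ 3`.
-/

open scoped RealInnerProductSpace

section

variable {H : Type*} [NormedAddCommGroup H] [InnerProductSpace ℝ H]

theorem HasGradientAt.comp_hasDerivAt [CompleteSpace H] {f : H → ℝ} {g v : H} {x : ℝ → H}
    {t : ℝ} (hf : HasGradientAt f g (x t)) (hx : HasDerivAt x v t) :
    HasDerivAt (fun s => f (x s)) ⟪g, v⟫ t := by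
  simpa [Function.comp_def] using hf.hasFDerivAt.comp_hasDerivAt t hx

noncomputable def dampedEnergy (f : H → ℝ) (xstar : H) (α : ℝ) (x : ℝ → H) (t : ℝ) : ℝ :=
  t ^ 2 * (f (x t) - f xstar) + (1 / 2) * ‖(2 : ℝ) • (x t - xstar) + t • deriv x t‖ ^ 2
    + (α - 3) * ‖x t - xstar‖ ^ 2

theorem hasDerivAt_dampedEnergy [CompleteSpace H] {f : H → ℝ} {g : H} (xstar : H) (α : ℝ)
    {x : ℝ → H} {t : ℝ} (hf : HasGradientAt f g (x t)) (hx : DifferentiableAt ℝ x t)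
    (hx' : DifferentiableAt ℝ (deriv x) t) :
    HasDerivAt (dampedEnergy f xstar α x)
      (2 * t * (f (x t) - f xstar) + t ^ 2 * ⟪g, deriv x t⟫
        + ⟪(2 : ℝ) • (x t - xstar) + t • deriv x t, (3 : ℝ) • deriv x t + t • deriv (deriv x) t⟫
        + 2 * (α - 3) * ⟪x t - xstar, deriv x t⟫) t := by
  have hdisp := hx.hasDerivAt.sub_const xstar
  have hpot := (hasDerivAt_pow 2 t).mul ((hf.comp_hasDerivAt hx.hasDerivAt).sub_const (f xstar))
  have hkin := ((hdisp.const_smul (2 : ℝ)).add ((hasDerivAt_id t).smul hx'.hasDerivAt)).norm_sq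
  refine ((hpot.add (hkin.const_mul (1 / 2))).add
    (hdisp.norm_sq.const_mul (α - 3))).congr_deriv ?_
  simp only [Pi.add_apply, Pi.smul_apply, Pi.smul_apply', id, one_smul]
  rw [show (2 : ℝ) • deriv x t + (t • deriv (deriv x) t + deriv x t)
    = (3 : ℝ) • deriv x t + t • deriv (deriv x) t by module]
  ring

/-- Pointwise form of the derivative estimate, with `u = x(t) - x*`, `v = ẋ(t)`, `a = ẍ(t)`,
`g = ∇f(x(t))` and `d = f(x(t)) - f(x*)`. -/
theorem dampedEnergy_deriv_nonpos {u v g a : H} {d t α : ℝ} (ht : 0 < t) (hα : 3 ≤ α)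
    (hd : d ≤ ⟪g, u⟫) (hode : a + (α / t) • v + g = 0) :
    2 * t * d + t ^ 2 * ⟪g, v⟫ + ⟪(2 : ℝ) • u + t • v, (3 : ℝ) • v + t • a⟫
      + 2 * (α - 3) * ⟪u, v⟫ ≤ 0 := by
  have hta : (3 : ℝ) • v + t • a = (3 - α) • v - t • g := by
    have : a = -((α / t) • v) - g := by linear_combination (norm := module) hode
    rw [this, smul_sub, smul_neg, smul_smul, mul_div_cancel₀ _ ht.ne']
    module
  have hexpand : 2 * t * d + t ^ 2 * ⟪g, v⟫ + ⟪(2 : ℝ) • u + t • v, (3 - α) • v - t • g⟫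
      + 2 * (α - 3) * ⟪u, v⟫ = 2 * t * (d - ⟪g, u⟫) - (α - 3) * t * ‖v‖ ^ 2 := by
    simp only [inner_add_left, inner_sub_right, inner_smul_left, inner_smul_right,
      real_inner_self_eq_norm_sq, real_inner_comm u g, real_inner_comm v g, RCLike.conj_to_real]
    ring
  rw [hta, hexpand]
  have : 0 ≤ (α - 3) * t * ‖v‖ ^ 2 := by positivity
  nlinarith

end

theorem stmt_12_general {H : Type*} [NormedAddCommGroup H] [InnerProductSpace ℝ H] [CompleteSpace H]
    (f : H → ℝ) (f' : H → H)
    (hgrad : ∀ y, HasGradientAt f (f' y) y)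
    (hconv : ∀ y z : H, f y + ⟪f' y, z - y⟫ ≤ f z)
    (xstar : H)
    (α : ℝ) (hα : 3 ≤ α)
    (x : ℝ → H) (hx : ContDiff ℝ 2 x)
    (hode : ∀ t > (0 : ℝ), deriv (deriv x) t + (α / t) • deriv x t + f' (x t) = 0)
    (E : ℝ → ℝ)
    (hE : ∀ t, E t = t ^ 2 * (f (x t) - f xstar)
        + (1 / 2) * ‖(2 : ℝ) • (x t - xstar) + t • deriv x t‖ ^ 2
        + (α - 3) * ‖x t - xstar‖ ^ 2) :
    AntitoneOn E (Set.Ioi 0) := by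
  obtain rfl : E = dampedEnergy f xstar α x := funext hE
  have hderiv (t : ℝ) := hasDerivAt_dampedEnergy xstar α (hgrad (x t))
    (hx.differentiable (by norm_num) t) (hx.differentiable_deriv_two t)
  refine antitoneOn_of_hasDerivWithinAt_nonpos (convex_Ioi 0)
    (fun t _ => (hderiv t).continuousAt.continuousWithinAt)
    (fun t _ => (hderiv t).hasDerivWithinAt) ?_
  rw [interior_Ioi]
  intro t ht
  have hsupport : f (x t) - f xstar ≤ ⟪f' (x t), x t - xstar⟫ := by
    have := hconv (x t) xstar
    rw [← neg_sub, inner_neg_right] at this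
    linarith
  exact dampedEnergy_deriv_nonpos ht hα hsupport (hode t ht)

theorem stmt_12 {H : Type*} [NormedAddCommGroup H] [InnerProductSpace ℝ H] [CompleteSpace H]
    (f : H → ℝ) (f' : H → H)
    (hgrad : ∀ y, HasGradientAt f (f' y) y)
    (hconv : ∀ y z : H, f y + ⟪f' y, z - y⟫ ≤ f z)
    (xstar : H) (hmin : ∀ y, f xstar ≤ f y)
    (α : ℝ) (hα : 3 ≤ α)
    (x : ℝ → H) (hx : ContDiff ℝ 2 x)
    (hode : ∀ t > (0 : ℝ), deriv (deriv x) t + (α / t) • deriv x t + f' (x t) = 0)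
    (E : ℝ → ℝ)
    (hE : ∀ t, E t = t ^ 2 * (f (x t) - f xstar)
        + (1 / 2) * ‖(2 : ℝ) • (x t - xstar) + t • deriv x t‖ ^ 2
        + (α - 3) * ‖x t - xstar‖ ^ 2) :
    AntitoneOn E (Set.Ioi 0) :=
  stmt_12_general f f' hgrad hconv xstar α hα x hx hode E hE
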